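/- (Identification of the treatment effect from centered within-object data; Theorem 5.3) For every j ∈ {1,…,k}, the treatment-effect parameter is identified from the second moments of the centered variables: Var(T'_j) > 0 and β = Cov(T'_j, Y'_j) / Var(T'_j). -/

import Mathlib

/-!
Centering within an object removes the common component `U`: with the centering weights
`c l = δ_{lj} - 1/k` one gets `T'_j = ∑ c_l ε_{T,l}` and `Y'_j = β T'_j + ∑ c_l ε_{Y,l}`.
The second sum is independent of every `ε_{T,l}`, so `Cov(T'_j, Y'_j) = β Var(T'_j)`, while
`Var(T'_j) = σ_T² ∑ c_l² ≥ σ_T² (1 - 1/k)² > 0` because `k ≥ 2`.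
-/

open MeasureTheory ProbabilityTheory
open scoped NNReal

noncomputable def covariance {Ω : Type*} [MeasurableSpace Ω] (μ : Measure Ω) (X Y : Ω → ℝ) : ℝ :=
  ∫ ω, (X ω - ∫ x, X x ∂μ) * (Y ω - ∫ x, Y x ∂μ) ∂μ

open Finset

section CenteringWeight

variable {ι : Type*} [Fintype ι] [DecidableEq ι]

noncomputable def centeringWeight (j l : ι) : ℝ :=
  (if l = j then 1 else 0) - 1 / Fintype.card ι

lemma sub_average_eq_sum_centeringWeight_mul (j : ι) (x : ι → ℝ) :
    x j - 1 / (Fintype.card ι : ℝ) * ∑ l, x l = ∑ l, centeringWeight j l * x l := by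
  simp [centeringWeight, sub_mul, sum_sub_distrib, ite_mul, mul_sum]

lemma sum_centeringWeight (j : ι) : ∑ l, centeringWeight j l = 0 := by
  have : (Fintype.card ι : ℝ) ≠ 0 := Nat.cast_ne_zero.2 (Fintype.card_pos_iff.2 ⟨j⟩).ne'
  simp [centeringWeight, sum_sub_distrib, this]

lemma sum_centeringWeight_mul_const_add (j : ι) (a : ℝ) (x : ι → ℝ) :
    ∑ l, centeringWeight j l * (a + x l) = ∑ l, centeringWeight j l * x l := by
  simp only [mul_add, sum_add_distrib, ← sum_mul, sum_centeringWeight, zero_mul, zero_add]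

lemma sum_centeringWeight_mul_affine (j : ι) (β b : ℝ) (x f : ι → ℝ) :
    ∑ l, centeringWeight j l * (β * x l + b + f l)
      = β * ∑ l, centeringWeight j l * x l + ∑ l, centeringWeight j l * f l := by
  simp only [mul_add, sum_add_distrib, ← sum_mul, sum_centeringWeight, zero_mul, add_zero,
    mul_sum, mul_left_comm]

lemma sum_sq_centeringWeight_pos (hcard : 2 ≤ Fintype.card ι) (j : ι) :
    0 < ∑ l, centeringWeight j l ^ 2 := by
  have hself : 0 < centeringWeight j j := by
    have : (2 : ℝ) ≤ Fintype.card ι := by exact_mod_cast hcard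
    rw [centeringWeight, if_pos rfl, sub_pos, div_lt_one (by linarith)]
    linarith
  exact (pow_pos hself 2).trans_le
    (single_le_sum (fun l _ => sq_nonneg (centeringWeight j l)) (mem_univ j))

end CenteringWeight

section Moments

variable {Ω : Type*} [MeasurableSpace Ω] {μ : Measure Ω}

lemma covariance_eq_cov (X Y : Ω → ℝ) : _root_.covariance μ X Y = cov[X, Y; μ] :=
  rfl

lemma memLp_two_of_map_eq_gaussianReal {X : Ω → ℝ} {m : ℝ} {v : ℝ≥0}
    (hX : μ.map X = gaussianReal m v) : MemLp X 2 μ := by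
  have hXm : AEMeasurable X μ := .of_map_ne_zero (hX ▸ IsProbabilityMeasure.ne_zero _)
  have h := memLp_id_gaussianReal' (μ := m) (v := v) 2 (by simp)
  rw [← hX] at h
  exact (memLp_map_measure_iff h.aestronglyMeasurable hXm).1 h

lemma variance_of_map_eq_gaussianReal {X : Ω → ℝ} {m : ℝ} {v : ℝ≥0}
    (hX : μ.map X = gaussianReal m v) : Var[X; μ] = v := by
  have hXm : AEMeasurable X μ := .of_map_ne_zero (hX ▸ IsProbabilityMeasure.ne_zero _)
  rw [← variance_id_map hXm, hX, variance_id_gaussianReal]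

variable [IsProbabilityMeasure μ] {ι κ : Type*} [Fintype ι] [Fintype κ]

lemma covariance_sum_const_mul {X : ι → Ω → ℝ} {Y : κ → Ω → ℝ} (a : ι → ℝ) (b : κ → ℝ)
    (hX : ∀ i, MemLp (X i) 2 μ) (hY : ∀ j, MemLp (Y j) 2 μ) :
    cov[fun ω => ∑ i, a i * X i ω, fun ω => ∑ j, b j * Y j ω; μ]
      = ∑ i, ∑ j, a i * b j * cov[X i, Y j; μ] := by
  rw [covariance_fun_sum_fun_sum (fun i => (hX i).const_mul (a i))
    (fun j => (hY j).const_mul (b j))]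
  simp only [covariance_const_mul_left, covariance_const_mul_right]
  exact sum_congr rfl fun i _ => sum_congr rfl fun j _ => by ring

lemma covariance_sum_const_mul_eq_zero_of_indepFun {X : ι → Ω → ℝ} {Y : κ → Ω → ℝ}
    (a : ι → ℝ) (b : κ → ℝ) (hX : ∀ i, MemLp (X i) 2 μ) (hY : ∀ j, MemLp (Y j) 2 μ)
    (hXY : ∀ i j, IndepFun (X i) (Y j) μ) :
    cov[fun ω => ∑ i, a i * X i ω, fun ω => ∑ j, b j * Y j ω; μ] = 0 := by
  simp [covariance_sum_const_mul a b hX hY, (hXY _ _).covariance_eq_zero (hX _) (hY _)]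

lemma variance_sum_const_mul_of_pairwise_indepFun [DecidableEq ι] {X : ι → Ω → ℝ} {v : ℝ}
    (c : ι → ℝ) (hX : ∀ i, MemLp (X i) 2 μ) (hvar : ∀ i, Var[X i; μ] = v)
    (hindep : Pairwise fun i j => IndepFun (X i) (X j) μ) :
    Var[fun ω => ∑ i, c i * X i ω; μ] = v * ∑ i, c i ^ 2 := by
  have hsum : MemLp (fun ω => ∑ i, c i * X i ω) 2 μ :=
    memLp_finsetSum _ fun i _ => (hX i).const_mul (c i)
  have hcov : ∀ i j, cov[X i, X j; μ] = if i = j then v else 0 := by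
    intro i j
    split_ifs with hij
    · rw [hij, covariance_self (hX j).aemeasurable, hvar]
    · exact (hindep hij).covariance_eq_zero (hX i) (hX j)
  rw [← covariance_self hsum.aemeasurable, covariance_sum_const_mul c c hX hX]
  simp [hcov, mul_sum, sq, mul_comm]

lemma covariance_const_mul_add_div_variance {X Z : Ω → ℝ} (β : ℝ)
    (hX : MemLp X 2 μ) (hZ : MemLp Z 2 μ) (hXZ : cov[X, Z; μ] = 0) (hvar : Var[X; μ] ≠ 0) :
    cov[X, fun ω => β * X ω + Z ω; μ] / Var[X; μ] = β := by
  rw [← Pi.add_def, covariance_add_right hX (hX.const_mul β) hZ, covariance_const_mul_right,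
    covariance_self hX.aemeasurable, hXZ, add_zero, mul_div_assoc, div_self hvar, mul_one]

end Moments

theorem centered_identification_general
    {Ω : Type*} [MeasureSpace Ω] [IsProbabilityMeasure (ℙ : Measure Ω)]
    (k : ℕ) (hk : 2 ≤ k) (α β τ : ℝ) (σT2 σY2 : ℝ≥0)
    (hσT : 0 < σT2)
    (U : Ω → ℝ) (εT εY : Fin k → Ω → ℝ)
    (hIndep : iIndepFun
      (Sum.elim (fun _ : Unit => U) (Sum.elim εT εY)) ℙ)
    (hεT : ∀ j, Measure.map (εT j) ℙ = gaussianReal 0 σT2)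
    (hεY : ∀ j, Measure.map (εY j) ℙ = gaussianReal 0 σY2)
    (T Y Tc Yc : Fin k → Ω → ℝ)
    (hT : ∀ j ω, T j ω = α * U ω + εT j ω)
    (hY : ∀ j ω, Y j ω = β * T j ω + τ * U ω + εY j ω)
    (hTc : ∀ j ω, Tc j ω = T j ω - (1 / (k : ℝ)) * ∑ l, T l ω)
    (hYc : ∀ j ω, Yc j ω = Y j ω - (1 / (k : ℝ)) * ∑ l, Y l ω) :
    ∀ j, 0 < variance (Tc j) ℙ ∧
      β = covariance ℙ (Tc j) (Yc j) / variance (Tc j) ℙ := by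
  intro j
  set c : Fin k → ℝ := centeringWeight j
  have hcenter (x : Fin k → ℝ) : x j - 1 / (k : ℝ) * ∑ l, x l = ∑ l, c l * x l := by
    simpa using sub_average_eq_sum_centeringWeight_mul j x
  have hTc_eq : Tc j = fun ω => ∑ l, c l * εT l ω := funext fun ω => by
    rw [hTc, hcenter fun l => T l ω]
    simp only [hT, c, sum_centeringWeight_mul_const_add]
  have hYc_eq : Yc j = fun ω => β * Tc j ω + ∑ l, c l * εY l ω := funext fun ω => by
    rw [hYc, hcenter fun l => Y l ω, hTc, hcenter fun l => T l ω]
    simp only [hY, c, sum_centeringWeight_mul_affine]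
  have hL2T (l : Fin k) : MemLp (εT l) 2 ℙ := memLp_two_of_map_eq_gaussianReal (hεT l)
  have hL2Y (l : Fin k) : MemLp (εY l) 2 ℙ := memLp_two_of_map_eq_gaussianReal (hεY l)
  have hvar : Var[Tc j; ℙ] = σT2 * ∑ l, c l ^ 2 := hTc_eq ▸
    variance_sum_const_mul_of_pairwise_indepFun c hL2T
      (fun l => variance_of_map_eq_gaussianReal (hεT l))
      (fun l m hlm => hIndep.indepFun (i := .inr (.inl l)) (j := .inr (.inl m)) (by simpa))
  have hvar_pos : 0 < Var[Tc j; ℙ] := hvar ▸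
    mul_pos (mod_cast hσT) (sum_sq_centeringWeight_pos (by simpa using hk) j)
  have hcov_noise : cov[Tc j, fun ω => ∑ l, c l * εY l ω; ℙ] = 0 := hTc_eq ▸
    covariance_sum_const_mul_eq_zero_of_indepFun c c hL2T hL2Y
      fun l m => hIndep.indepFun (i := .inr (.inl l)) (j := .inr (.inr m)) (by simp)
  refine ⟨hvar_pos, ?_⟩
  rw [covariance_eq_cov, hYc_eq, covariance_const_mul_add_div_variance β
    (hTc_eq ▸ memLp_finsetSum _ fun l _ => (hL2T l).const_mul (c l))
    (memLp_finsetSum _ fun l _ => (hL2Y l).const_mul (c l)) hcov_noise hvar_pos.ne']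

/-- **Theorem 5.3.** The treatment-effect parameter is identified
from the second moments of the centered variables: `Var(T'_j) > 0` and
`β = Cov(T'_j, Y'_j) / Var(T'_j)`. -/
theorem centered_identification
    {Ω : Type*} [MeasureSpace Ω] [IsProbabilityMeasure (ℙ : Measure Ω)]
    (k : ℕ) (hk : 2 ≤ k) (α β τ : ℝ) (σU2 σT2 σY2 : ℝ≥0)
    (hσU : 0 < σU2) (hσT : 0 < σT2) (hσY : 0 < σY2)
    (U : Ω → ℝ) (εT εY : Fin k → Ω → ℝ)
    (hmU : Measurable U) (hmεT : ∀ j, Measurable (εT j)) (hmεY : ∀ j, Measurable (εY j))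
    (hIndep : iIndepFun
      (Sum.elim (fun _ : Unit => U) (Sum.elim εT εY)) ℙ)
    (hU : Measure.map U ℙ = gaussianReal 0 σU2)
    (hεT : ∀ j, Measure.map (εT j) ℙ = gaussianReal 0 σT2)
    (hεY : ∀ j, Measure.map (εY j) ℙ = gaussianReal 0 σY2)
    (T Y Tc Yc : Fin k → Ω → ℝ)
    (hT : ∀ j ω, T j ω = α * U ω + εT j ω)
    (hY : ∀ j ω, Y j ω = β * T j ω + τ * U ω + εY j ω)
    (hTc : ∀ j ω, Tc j ω = T j ω - (1 / (k : ℝ)) * ∑ l, T l ω)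
    (hYc : ∀ j ω, Yc j ω = Y j ω - (1 / (k : ℝ)) * ∑ l, Y l ω) :
    ∀ j, 0 < variance (Tc j) ℙ ∧
      β = covariance ℙ (Tc j) (Yc j) / variance (Tc j) ℙ :=
  centered_identification_general k hk α β τ σT2 σY2 hσT U εT εY hIndep hεT hεY T Y Tc Yc hT hY hTc
    hYc
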